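/- arXiv:1507.00067 — 5 statements merged into one kernel-verified Lean document; each statement's English description precedes it below -/
import Mathlib

section
/- Let F : [0,1]² → [0,1] be a measurable function and ξ a real number. If ∫₀¹ F(x,z)·F(y,z) dz = ξ for almost every pair (x,y) ∈ [0,1]², then ∫₀¹ F(x,z)² dz = ξ for almost every x ∈ [0,1]. -/
/-!
Realise `x ↦ F(x, ·)` as a map `Φ` into the separable Hilbert space `L²[0,1]`, so that the
hypothesis says `⟪Φ x, Φ y⟫ = ξ` for almost every pair. A set `A` with `A × A` null is null.
Since `2⟪u, v⟫ ≤ ‖u‖² + ‖v‖²`, the square of `{‖Φ x‖² < ξ}` lies in the exceptional null set.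
On `{‖Φ x‖² ≥ ξ + c}` the identity `‖u - v‖² = ‖u‖² + ‖v‖² - 2⟪u, v⟫` keeps the values of `Φ`
at distance `≥ √(2c)` off that null set; covering `L²` by countably many small balls then shows
this set is null as well.
-/

open MeasureTheory Set

section ProdSelf

variable {α : Type*} [MeasurableSpace α] {μ : Measure α} [SFinite μ] {N : Set (α × α)}

lemma measure_eq_zero_of_prod_self_subset (hN : μ.prod μ N = 0) {A : Set α}
    (hA : A ×ˢ A ⊆ N) : μ A = 0 := by
  have h : μ A * μ A = 0 := by
    rw [← Measure.prod_prod]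
    exact measure_mono_null hA hN
  exact mul_self_eq_zero.mp h

lemma measure_eq_zero_of_dist_le_of_notMem {E : Type*} [PseudoMetricSpace E]
    [TopologicalSpace.SeparableSpace E] {Φ : α → E} (hN : μ.prod μ N = 0) {S : Set α} {δ : ℝ}
    (hδ : 0 < δ) (hsep : ∀ x ∈ S, ∀ y ∈ S, (x, y) ∉ N → δ ≤ dist (Φ x) (Φ y)) :
    μ S = 0 := by
  obtain ⟨D, hD_count, hD_dense⟩ := TopologicalSpace.exists_countable_dense E
  have hcover : S ⊆ ⋃ d ∈ D, S ∩ Φ ⁻¹' Metric.ball d (δ / 2) := by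
    intro x hx
    obtain ⟨d, hd, hdD⟩ := Metric.dense_iff.mp hD_dense (Φ x) (δ / 2) (by positivity)
    exact mem_biUnion hdD ⟨hx, by rwa [Metric.mem_ball, dist_comm] at hd⟩
  refine measure_mono_null hcover ((measure_biUnion_null_iff hD_count).mpr fun d _ => ?_)
  refine measure_eq_zero_of_prod_self_subset hN ?_
  rintro ⟨x, y⟩ ⟨⟨hxS, hxd⟩, ⟨hyS, hyd⟩⟩
  by_contra hxy
  have hclose : dist (Φ x) (Φ y) < δ := by
    calc dist (Φ x) (Φ y) ≤ dist (Φ x) d + dist (Φ y) d := dist_triangle_right _ _ _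
      _ < δ / 2 + δ / 2 := add_lt_add hxd hyd
      _ = δ := add_halves δ
  exact (hsep x hxS y hyS hxy).not_gt hclose

theorem ae_norm_sq_eq_of_ae_inner_eq {E : Type*} [NormedAddCommGroup E] [InnerProductSpace ℝ E]
    [TopologicalSpace.SeparableSpace E] {Φ : α → E} {ξ : ℝ}
    (h : ∀ᵐ p ∂μ.prod μ, inner ℝ (Φ p.1) (Φ p.2) = ξ) :
    ∀ᵐ x ∂μ, ‖Φ x‖ ^ 2 = ξ := by
  have hN : μ.prod μ {p | inner ℝ (Φ p.1) (Φ p.2) ≠ ξ} = 0 := ae_iff.mp h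
  have hbelow : μ {x | ‖Φ x‖ ^ 2 < ξ} = 0 := by
    refine measure_eq_zero_of_prod_self_subset hN ?_
    rintro ⟨x, y⟩ ⟨hx : ‖Φ x‖ ^ 2 < ξ, hy : ‖Φ y‖ ^ 2 < ξ⟩
    show inner ℝ (Φ x) (Φ y) ≠ ξ
    intro hxy
    nlinarith [norm_sub_sq_real (Φ x) (Φ y), sq_nonneg ‖Φ x - Φ y‖]
  have habove : ∀ c > 0, μ {x | ξ + c ≤ ‖Φ x‖ ^ 2} = 0 := by
    intro c hc
    refine measure_eq_zero_of_dist_le_of_notMem (Φ := Φ) (δ := √(2 * c)) hN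
      (Real.sqrt_pos.mpr (by positivity))
      fun x (hx : ξ + c ≤ _) y (hy : ξ + c ≤ _) (hxy : ¬¬_) => ?_
    have hsq : 2 * c ≤ ‖Φ x - Φ y‖ ^ 2 := by
      linarith [norm_sub_sq_real (Φ x) (Φ y), not_not.mp hxy]
    calc √(2 * c) ≤ √(‖Φ x - Φ y‖ ^ 2) := Real.sqrt_le_sqrt hsq
      _ = dist (Φ x) (Φ y) := by rw [Real.sqrt_sq (norm_nonneg _), dist_eq_norm]
  have hcover : {x | ‖Φ x‖ ^ 2 ≠ ξ}
      ⊆ {x | ‖Φ x‖ ^ 2 < ξ} ∪ ⋃ n : ℕ, {x | ξ + 1 / (n + 1) ≤ ‖Φ x‖ ^ 2} := by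
    intro x hx
    rcases lt_or_gt_of_ne hx with hlt | hgt
    · exact Or.inl hlt
    · obtain ⟨n, hn⟩ := exists_nat_one_div_lt (sub_pos.mpr hgt)
      exact Or.inr (mem_iUnion.mpr ⟨n, show ξ + 1 / (n + 1) ≤ ‖Φ x‖ ^ 2 by linarith⟩)
  exact ae_iff.mpr (measure_mono_null hcover
    (measure_union_null hbelow (measure_iUnion_null fun n => habove _ (by positivity))))

end ProdSelf

lemma inner_toLp_toLp_real {α : Type*} [MeasurableSpace α] {μ : Measure α} {f g : α → ℝ}
    (hf : MemLp f 2 μ) (hg : MemLp g 2 μ) :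
    inner ℝ (hf.toLp f) (hg.toLp g) = ∫ a, f a * g a ∂μ := by
  rw [L2.inner_def]
  refine integral_congr_ae ?_
  filter_upwards [hf.coeFn_toLp, hg.coeFn_toLp] with a hfa hga
  rw [hfa, hga, real_inner_eq_re_inner, RCLike.inner_apply, conj_trivial, mul_comm]
  rfl

theorem stmt0 (F : ℝ → ℝ → ℝ) (ξ : ℝ)
    (hF : Measurable (fun p : ℝ × ℝ => F p.1 p.2))
    (hrange : ∀ x y, F x y ∈ Set.Icc (0:ℝ) 1)
    (h : ∀ᵐ p ∂(volume.restrict ((Set.Icc (0:ℝ) 1) ×ˢ (Set.Icc (0:ℝ) 1))),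
      ∫ z in Set.Icc (0:ℝ) 1, F p.1 z * F p.2 z = ξ) :
    ∀ᵐ x ∂(volume.restrict (Set.Icc (0:ℝ) 1)),
      ∫ z in Set.Icc (0:ℝ) 1, (F x z)^2 = ξ := by
  set μ := volume.restrict (Icc (0:ℝ) 1)
  have : Fact ((2 : ENNReal) ≠ ⊤) := ⟨ENNReal.ofNat_ne_top⟩
  have hmem : ∀ x, MemLp (F x) 2 μ := fun x =>
    MemLp.of_bound (hF.comp measurable_prodMk_left).aestronglyMeasurable 1
      (ae_of_all _ fun z => by
        rw [Real.norm_eq_abs, abs_le]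
        exact ⟨by linarith [(hrange x z).1], (hrange x z).2⟩)
  have hprod : volume.restrict (Icc (0:ℝ) 1 ×ˢ Icc (0:ℝ) 1) = μ.prod μ := by
    rw [Measure.volume_eq_prod, Measure.prod_restrict]
  rw [hprod] at h
  filter_upwards [ae_norm_sq_eq_of_ae_inner_eq (Φ := fun x => (hmem x).toLp (F x))
    (h.mono fun p hp => (inner_toLp_toLp_real _ _).trans hp)] with x hx
  rw [← hx, ← real_inner_self_eq_norm_sq, inner_toLp_toLp_real]
  simp only [sq]
end

section
/- Let {J_i}_{i∈I} be a countable collection of pairwise disjoint nonempty open subintervals of [0,1) such that each J_i has the form (1 - 2α_i, 1 - α_i) for some α_i ∈ (0,1), and such that ∑_i |J_i|² = 1/3. Then the collection consists exactly of the intervals (1 - 2^(1-k), 1 - 2^(-k)) for k = 1, 2, 3, …. -/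
theorem stmt7 {I : Type*} [Countable I] (α : I → ℝ)
    (hα : ∀ i, α i ∈ Set.Ioo (0:ℝ) 1)
    (J : I → Set ℝ) (hJ : ∀ i, J i = Set.Ioo (1 - 2 * α i) (1 - α i))
    (hsub : ∀ i, J i ⊆ Set.Ico (0:ℝ) 1)
    (hdisj : Pairwise (Function.onFun Disjoint J))
    (hsum : ∑' i, (α i)^2 = 1/3) :
    Set.range J =
      {S | ∃ k : ℕ, 1 ≤ k ∧ S = Set.Ioo (1 - (2:ℝ)^(1-(k:ℤ))) (1 - (2:ℝ)^(-(k:ℤ)))} := by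
  classical
  have hα0 : ∀ i, 0 < α i := fun i => (hα i).1
  have hα1 : ∀ i, α i < 1 := fun i => (hα i).2
  -- each α i ≤ 1/2
  have hhalf : ∀ i, α i ≤ 1/2 := by
    intro i
    by_contra h
    push_neg at h
    have hmem : (1 - 2*α i)/2 ∈ J i := by
      rw [hJ i]
      constructor
      · nlinarith
      · nlinarith [hα1 i]
    have := (hsub i hmem).1
    nlinarith
  -- separation
  have sep : ∀ i j, i ≠ j → 2 * min (α i) (α j) ≤ max (α i) (α j) := by
    intro i j hij
    have hd := hdisj hij
    have hd' : Disjoint (J i) (J j) := hd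
    rw [hJ i, hJ j, Set.Ioo_disjoint_Ioo] at hd'
    rcases le_total (α i) (α j) with h | h
    · rw [min_eq_left h, max_eq_right h]
      rcases le_or_gt (1 - α i) (1 - α j) with h2 | h2 <;>
        rcases le_or_gt (1 - 2*α i) (1 - 2*α j) with h3 | h3 <;>
        [skip; skip; skip; skip] <;>
      · rw [min_def, max_def] at hd'
        split_ifs at hd' <;> nlinarith [hα0 i, hα0 j]
    · rw [min_eq_right h, max_eq_left h]
      rw [min_def, max_def] at hd'
      split_ifs at hd' <;> nlinarith [hα0 i, hα0 j]
  have αinj : Function.Injective α := by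
    intro i j h
    by_contra hne
    have := sep i j hne
    rw [h, min_self, max_self] at this
    nlinarith [hα0 j]
  -- key finite lemma
  have lemB : ∀ n : ℕ, ∀ F : Finset I, F.card = n → ∀ x c : ℝ,
      F.Nonempty → (∀ j ∈ F, x ≤ α j ∧ α j ≤ c) → 2^(n-1) * x ≤ c := by
    intro n
    induction n with
    | zero =>
      intro F hF x c hne _
      exact absurd (Finset.card_eq_zero.mp hF) hne.ne_empty
    | succ n ih =>
      intro F hF x c hne hb
      obtain ⟨j₀, hj₀F, hj₀max⟩ := F.exists_max_image α hne
      rcases Nat.eq_zero_or_pos n with hn | hn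
      · subst hn
        simpa using le_trans (hb j₀ hj₀F).1 (hb j₀ hj₀F).2
      · have hcard : (F.erase j₀).card = n := by
          rw [Finset.card_erase_of_mem hj₀F, hF]; omega
        have hne' : (F.erase j₀).Nonempty := by
          rw [← Finset.card_pos, hcard]; exact hn
        have hb' : ∀ j ∈ F.erase j₀, x ≤ α j ∧ α j ≤ α j₀ / 2 := by
          intro j hj
          have hjF := Finset.mem_of_mem_erase hj
          have hjne : j ≠ j₀ := Finset.ne_of_mem_erase hj
          have hsep := sep j j₀ hjne
          have hle : α j ≤ α j₀ := hj₀max j hjF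
          rw [min_eq_left hle, max_eq_right hle] at hsep
          exact ⟨(hb j hjF).1, by linarith⟩
        have hih := ih (F.erase j₀) hcard x (α j₀ / 2) hne' hb'
        calc (2:ℝ)^(n+1-1) * x = 2 * (2^(n-1) * x) := by
              rw [show n+1-1 = (n-1)+1 by omega, pow_succ]; ring
        _ ≤ 2 * (α j₀ / 2) := by linarith
        _ ≤ c := by linarith [(hb j₀ hj₀F).2]
  -- finiteness of upper sets
  have hfin : ∀ i, {j | α i ≤ α j}.Finite := by
    intro i
    by_contra h
    have h' : {j | α i ≤ α j}.Infinite := h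
    obtain ⟨N, hN⟩ := pow_unbounded_of_one_lt (1 / (2 * α i)) (show (1:ℝ) < 2 by norm_num)
    obtain ⟨F, hFsub, hFcard⟩ := h'.exists_subset_card_eq (N+1)
    have hne : F.Nonempty := by rw [← Finset.card_pos, hFcard]; omega
    have := lemB (N+1) F hFcard (α i) (1/2) hne (fun j hj => ⟨hFsub hj, hhalf j⟩)
    simp only [Nat.add_sub_cancel] at this
    have hi0 := hα0 i
    rw [div_lt_iff₀ (by positivity)] at hN
    nlinarith
  set S : I → Finset I := fun i => (hfin i).toFinset with hS
  set nf : I → ℕ := fun i => (S i).card with hnf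
  have hmemS : ∀ i j, j ∈ S i ↔ α i ≤ α j := by
    intro i j; simp [hS, Set.Finite.mem_toFinset]
  have hnf1 : ∀ i, 1 ≤ nf i := by
    intro i
    have : i ∈ S i := (hmemS i i).mpr le_rfl
    exact Finset.card_pos.mpr ⟨i, this⟩
  -- bound α i ≤ (1/2)^(nf i)
  have hbound : ∀ i, α i ≤ (1/2)^(nf i) := by
    intro i
    have hne : (S i).Nonempty := ⟨i, (hmemS i i).mpr le_rfl⟩
    have := lemB (nf i) (S i) rfl (α i) (1/2) hne
      (fun j hj => ⟨(hmemS i j).mp hj, hhalf j⟩)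
    have h1 := hnf1 i
    rcases Nat.exists_eq_add_of_le h1 with ⟨m, hm⟩
    rw [hm] at this ⊢
    simp only [Nat.add_sub_cancel_left, Nat.add_sub_cancel] at this
    rw [pow_add, pow_one, div_pow, one_pow,
      show (1:ℝ)/2 * (1/2^m) = (1/2) / 2^m by ring,
      le_div_iff₀ (by positivity : (0:ℝ) < 2^m)]
    nlinarith [this]
  -- strict monotonicity / injectivity of nf
  have hstrict : ∀ i j, α i < α j → nf j < nf i := by
    intro i j hij
    apply Finset.card_lt_card
    constructor
    · intro k hk
      exact (hmemS i k).mpr (le_trans hij.le ((hmemS j k).mp hk))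
    · intro hcon
      have : i ∈ S j := hcon ((hmemS i i).mpr le_rfl)
      exact absurd ((hmemS j i).mp this) (not_le.mpr hij)
  have ninj : Function.Injective nf := by
    intro i j h
    by_contra hne
    rcases lt_trichotomy (α i) (α j) with h' | h' | h'
    · exact (hstrict i j h').ne h.symm
    · exact hne (αinj h')
    · exact (hstrict j i h').ne h
  -- summability
  have hsumm : Summable (fun i => (α i)^2) := by
    by_contra h
    rw [tsum_eq_zero_of_not_summable h] at hsum
    norm_num at hsum
  -- geometric series
  have hg'summ : Summable (fun n : ℕ => ((1/4:ℝ))^(n+1)) := by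
    have h := (summable_geometric_of_lt_one (by norm_num : (0:ℝ) ≤ 1/4)
      (by norm_num : (1/4:ℝ) < 1)).mul_right (1/4)
    have heq : (fun n : ℕ => ((1/4:ℝ))^(n+1)) = fun n : ℕ => ((1/4:ℝ))^n * (1/4) := by
      funext n; rw [pow_succ]
    rw [heq]
    exact h
  have hg' : ∑' n : ℕ, ((1/4:ℝ))^(n+1) = 1/3 := by
    have h0 : ∑' n : ℕ, ((1/4:ℝ))^n = (1 - 1/4)⁻¹ :=
      tsum_geometric_of_lt_one (by norm_num) (by norm_num)
    have h1 : ∑' n : ℕ, ((1/4:ℝ))^(n+1) = (1/4) * ∑' n : ℕ, ((1/4:ℝ))^n := by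
      rw [← tsum_mul_left]
      exact tsum_congr fun n => by ring
    rw [h1, h0]; norm_num
  set e : I → ℕ := fun i => nf i - 1 with he
  have henf : ∀ i, e i + 1 = nf i := fun i => Nat.succ_pred_eq_of_pos (hnf1 i)
  have einj : Function.Injective e := by
    intro i j h
    apply ninj
    rw [← henf i, ← henf j, h]
  have hge : ∀ i, ((1/4:ℝ))^(e i + 1) = ((1/2:ℝ)^(nf i))^2 := by
    intro i
    rw [henf i, ← pow_mul, show (1/4:ℝ) = (1/2)^2 by norm_num, ← pow_mul]
    ring_nf
  have hfe : ∀ i, (α i)^2 ≤ ((1/4:ℝ))^(e i + 1) := by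
    intro i
    rw [hge i]
    have h1 := hbound i
    have h2 := hα0 i
    have h3 : (0:ℝ) < (1/2)^(nf i) := by positivity
    nlinarith
  have hgesumm : Summable (fun i => ((1/4:ℝ))^(e i + 1)) := by
    have h := hg'summ.comp_injective einj
    exact h
  have hle13 : ∑' i, ((1/4:ℝ))^(e i + 1) ≤ 1/3 := by
    rw [← hg']
    exact Summable.tsum_le_tsum_of_inj e einj (fun c _ => by positivity)
      (fun i => le_rfl) hgesumm hg'summ
  -- the deficit h
  have hhsumm : Summable (fun i => ((1/4:ℝ))^(e i + 1) - (α i)^2) := hgesumm.sub hsumm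
  have hhsum0 : ∑' i, (((1/4:ℝ))^(e i + 1) - (α i)^2) ≤ 0 := by
    rw [Summable.tsum_sub hgesumm hsumm, hsum]
    linarith
  have hzero : ∀ i, ((1/4:ℝ))^(e i + 1) - (α i)^2 = 0 := by
    intro i
    have hnn : ∀ j, 0 ≤ ((1/4:ℝ))^(e j + 1) - (α j)^2 := fun j => by linarith [hfe j]
    have hle := Summable.le_tsum hhsumm i (fun j _ => hnn j)
    have := hnn i
    linarith
  have hαval : ∀ i, α i = (1/2)^(nf i) := by
    intro i
    have h1 := hzero i
    rw [hge i] at h1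
    have h2 := hα0 i
    have h3 : (0:ℝ) < (1/2)^(nf i) := by positivity
    nlinarith
  -- sum over range e is exactly 1/3, hence e surjective
  have hesurj : Function.Surjective e := by
    intro m
    by_contra h
    push_neg at h
    have hmnr : m ∉ Set.range e := by
      rintro ⟨i, rfl⟩; exact h i rfl
    set u : ℕ → ℝ := (Set.range e).indicator (fun n => ((1/4:ℝ))^(n+1)) with hu
    have husumm : Summable u := hg'summ.indicator _
    have hueq : ∑' n, u n = ∑' i, ((1/4:ℝ))^(e i + 1) := by
      rw [← Function.Injective.tsum_eq einj (f := u)]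
      · exact tsum_congr fun i => by
          rw [hu, Set.indicator_of_mem (Set.mem_range_self i)]
      · intro n hn
        rw [Function.mem_support, hu] at hn
        by_contra hc
        exact hn (Set.indicator_of_notMem hc _)
    have hsum13 : ∑' i, ((1/4:ℝ))^(e i + 1) = 1/3 := by
      have : ∑' i, ((1/4:ℝ))^(e i + 1) = ∑' i, (α i)^2 := by
        exact tsum_congr fun i => by linarith [hzero i]
      rw [this, hsum]
    have hlt : ∑' n, u n < ∑' n : ℕ, ((1/4:ℝ))^(n+1) := by
      apply Summable.tsum_lt_tsum (i := m)
      · intro n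
        rw [hu]
        exact Set.indicator_le_self' (fun n _ => by positivity) n
      · rw [hu, Set.indicator_of_notMem hmnr]
        positivity
      · exact husumm
      · exact hg'summ
    rw [hueq, hsum13, hg'] at hlt
    exact absurd hlt (lt_irrefl _)
  -- conclude
  ext T
  simp only [Set.mem_range, Set.mem_setOf_eq]
  have hval : ∀ i, J i = Set.Ioo (1 - (2:ℝ)^(1-(nf i:ℤ))) (1 - (2:ℝ)^(-(nf i:ℤ))) := by
    intro i
    rw [hJ i, hαval i]
    have h1 : ((1:ℝ)/2)^(nf i) = (2:ℝ)^(-(nf i:ℤ)) := by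
      rw [zpow_neg, zpow_natCast, one_div, inv_pow]
    have h2 : 2 * ((1:ℝ)/2)^(nf i) = (2:ℝ)^(1-(nf i:ℤ)) := by
      rw [h1, zpow_sub₀ (by norm_num : (2:ℝ) ≠ 0), zpow_one, zpow_neg]
      rw [zpow_natCast]
      ring
    rw [h2, h1]
  constructor
  · rintro ⟨i, rfl⟩
    exact ⟨nf i, hnf1 i, (hval i).symm ▸ rfl⟩
  · rintro ⟨k, hk1, rfl⟩
    obtain ⟨i, hi⟩ := hesurj (k - 1)
    have hik : nf i = k := by
      rw [← henf i, hi]; omega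
    exact ⟨i, by rw [hval i, hik]⟩
end

section
/- Let U₁,…,U_k be measurable non-null subsets of [0,1] with k < 2^(m/4) (m ≥ 25), and for each 1 ≤ i ≤ m let V_i^−, V_i^+ be the subsets of [0,1] corresponding to parts of W_CF^m whose vectors have i-th coordinate −1 and +1 respectively. Define S_t = ∑_{i=1}^m |U_t ∩ V_i^−|·|U_t ∩ V_i^+|. If |U_t| > 2^(-m/3), then S_t ≥ |U_t|²·m/32. -/
open MeasureTheory

/-- The ±1 vector associated with the part of `[0,1)` containing `x`, when `[0,1)` is
divided into `2^m` parts of equal length indexed by vectors in `{-1,+1}^m`. -/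
noncomputable def cfVec (m : ℕ) (x : ℝ) : Fin m → ℝ :=
  fun i => if Nat.testBit ⌊x * 2 ^ m⌋₊ i then 1 else -1

/-- The Conlon–Fox step graphon: the value between the parts indexed by `u` and `u'` is
`1/2 + ⟨u,u'⟩/(4√m)` truncated to `[0,1]`. -/
noncomputable def WCF (m : ℕ) (x y : ℝ) : ℝ :=
  max 0 (min 1 (1/2 + (∑ i : Fin m, cfVec m x i * cfVec m y i) / (4 * Real.sqrt m)))

/-- The (unnormalized) density between `A` and `B` in the graphon `W`. -/
noncomputable def graphonDensity (W : ℝ → ℝ → ℝ) (A B : Set ℝ) : ℝ :=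
  ∫ p in A ×ˢ B, W p.1 p.2

/-- `U` is a partition of `[0,1]` into `k` measurable non-null parts that is
weak `ε`-regular for the graphon `W`. -/
def IsWeakRegularPartition (W : ℝ → ℝ → ℝ) (ε : ℝ) (k : ℕ) (U : Fin k → Set ℝ) : Prop :=
  (∀ i, MeasurableSet (U i)) ∧ (∀ i, U i ⊆ Set.Icc 0 1) ∧
  (∀ i, 0 < (volume (U i)).toReal) ∧
  Pairwise (Function.onFun Disjoint U) ∧ (⋃ i, U i) = Set.Icc (0:ℝ) 1 ∧
  ∀ A B : Set ℝ, MeasurableSet A → MeasurableSet B →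
    A ⊆ Set.Icc 0 1 → B ⊆ Set.Icc 0 1 →
    |graphonDensity W A B - ∑ i, ∑ j,
      graphonDensity W (U i) (U j) / ((volume (U i)).toReal * (volume (U j)).toReal)
        * (volume (U i ∩ A)).toReal * (volume (U j ∩ B)).toReal| ≤ ε

/-- The set `V_i^s`: points of `[0,1)` lying in parts whose vector has `i`-th
coordinate `+1` (for `s = true`) or `-1` (for `s = false`). -/
def cfPart (m : ℕ) (i : Fin m) (s : Bool) : Set ℝ :=
  {x ∈ Set.Ico (0:ℝ) 1 | Nat.testBit ⌊x * 2^m⌋₊ i = s}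


/-!
Write `p v` for the measure of `U ∩ (part v)` and `μ = |U|`. With `d_i = ∑_v v_i p v`, each
coordinate satisfies `4 |U ∩ V_i^-| |U ∩ V_i^+| = μ² - d_i²`, and
`∑_i d_i² = ∑_{v,w} ⟨v,w⟩ p v p w` with `⟨v,w⟩ = m - 2 dist(v,w)`. In `∑_w ⟨v,w⟩ p w`, the parts
at Hamming distance `> m/8` from `v` contribute at most `(3/4) m μ`, while those within distance
`m/8` have total measure at most `2^{-m} ∑_{j ≤ m/8} C(m,j) ≤ μ/8`, so contribute at most `m μ/8`.
So `∑_i d_i² ≤ (7/8) m μ²`. The binomial tail bound comes from `7^(m-k) ∑_{j ≤ k} C(m,j) ≤ 8^m`,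
i.e. from the binomial expansion of `(1 + 7)^m`.
-/

open Finset

theorem pow_sub_mul_sum_range_choose_le {b : ℕ} (hb : 1 ≤ b) {m k : ℕ} (hk : k ≤ m) :
    b ^ (m - k) * ∑ j ∈ range (k + 1), m.choose j ≤ (b + 1) ^ m :=
  calc b ^ (m - k) * ∑ j ∈ range (k + 1), m.choose j
      = ∑ j ∈ range (k + 1), b ^ (m - k) * m.choose j := mul_sum ..
    _ ≤ ∑ j ∈ range (k + 1), b ^ (m - j) * m.choose j := by
        gcongr with j hj
        have := mem_range.1 hj
        omega
    _ ≤ ∑ j ∈ range (m + 1), b ^ (m - j) * m.choose j :=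
        sum_le_sum_of_subset (range_subset_range.2 (by omega))
    _ = (b + 1) ^ m := by rw [add_comm b 1, add_pow]; simp

theorem two_pow_mul_le_seven_pow {m : ℕ} (hm : 25 ≤ m) :
    2 ^ 72 * 2 ^ (56 * m) ≤ 7 ^ (21 * m) := by
  induction m, hm using Nat.le_induction with
  | base => rw [pow_mul, pow_mul]; norm_num
  | succ n _ ih =>
    rw [Nat.mul_succ, Nat.mul_succ, pow_add, pow_add, ← mul_assoc]
    exact Nat.mul_le_mul ih (by norm_num)

theorem eight_mul_sum_range_choose_cube_le {m : ℕ} (hm : 25 ≤ m) :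
    (8 * ∑ j ∈ range (m / 8 + 1), m.choose j) ^ 3 ≤ 4 ^ m := by
  set N := ∑ j ∈ range (m / 8 + 1), m.choose j
  set r := m - m / 8
  -- raising to the 8th power clears the fraction in `r ≥ 7m/8`
  have hN : 7 ^ r * N ≤ 2 ^ (3 * m) := by
    rw [pow_mul]; exact pow_sub_mul_sum_range_choose_le (by norm_num) (Nat.div_le_self m 8)
  suffices ((8 * N) ^ 3 * 7 ^ (3 * r)) ^ 8 ≤ (4 ^ m * 7 ^ (3 * r)) ^ 8 from
    Nat.le_of_mul_le_mul_right (Nat.pow_le_pow_iff_left (by norm_num) |>.1 this) (by positivity)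
  calc ((8 * N) ^ 3 * 7 ^ (3 * r)) ^ 8 = 2 ^ 72 * (7 ^ r * N) ^ 24 := by ring
    _ ≤ 2 ^ 72 * (2 ^ (3 * m)) ^ 24 := by gcongr
    _ = 2 ^ (16 * m) * (2 ^ 72 * 2 ^ (56 * m)) := by ring
    _ ≤ 2 ^ (16 * m) * 7 ^ (21 * m) := by gcongr; exact two_pow_mul_le_seven_pow hm
    _ ≤ 2 ^ (16 * m) * 7 ^ (24 * r) := by
        gcongr 2 ^ _ * ?_
        exact Nat.pow_le_pow_right (by norm_num) (by omega)
    _ = (4 ^ m * 7 ^ (3 * r)) ^ 8 := by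
        rw [show (4:ℕ) ^ m = 2 ^ (2 * m) by rw [pow_mul]; norm_num]
        ring

section SignVectors

variable {m : ℕ}

theorem card_filter_hammingDist_le (v : Fin m → Bool) (k : ℕ) :
    #{w | hammingDist v w ≤ k} ≤ ∑ j ∈ range (k + 1), m.choose j := by
  let diff : (Fin m → Bool) → Finset (Fin m) := fun w => {i | v i ≠ w i}
  calc #{w | hammingDist v w ≤ k}
      ≤ #((range (k + 1)).biUnion fun j => powersetCard j univ) := by
        refine card_le_card_of_injOn diff (fun w hw => ?_) (fun w _ w' _ h => funext fun i => ?_)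
        · simpa [diff, Nat.lt_succ_iff, hammingDist] using hw
        · have hi := congrArg (i ∈ ·) h
          simp only [diff, mem_filter, mem_univ, true_and, eq_iff_iff] at hi
          revert hi
          cases v i <;> cases w i <;> cases w' i <;> simp
    _ ≤ ∑ j ∈ range (k + 1), #(powersetCard j (univ : Finset (Fin m))) := card_biUnion_le
    _ = ∑ j ∈ range (k + 1), m.choose j := by simp

/-- `boolSign ∘ v` is the `±1` vector of the paper indexed by `v`. -/
def boolSign (b : Bool) : ℝ := if b then 1 else -1

theorem sum_boolSign_mul_boolSign (v w : Fin m → Bool) :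
    ∑ i, boolSign (v i) * boolSign (w i) = m - 2 * hammingDist v w := by
  have hterm : ∀ i, boolSign (v i) * boolSign (w i) = 1 - 2 * if v i ≠ w i then 1 else 0 := by
    intro i
    cases v i <;> cases w i <;> norm_num [boolSign]
  simp only [hterm, sum_sub_distrib, ← mul_sum, sum_boole, hammingDist]
  simp

variable (p : (Fin m → Bool) → ℝ)

theorem sum_sq_sum_boolSign_mul :
    ∑ i, (∑ v, boolSign (v i) * p v) ^ 2 =
      ∑ v, p v * ∑ w, ((m : ℝ) - 2 * hammingDist v w) * p w := by
  simp_rw [← sum_boolSign_mul_boolSign, sq, sum_mul_sum, mul_sum, sum_mul]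
  rw [sum_comm]
  refine sum_congr rfl fun v _ => ?_
  rw [sum_comm]
  refine sum_congr rfl fun w _ => ?_
  rw [mul_sum]
  exact sum_congr rfl fun j _ => by ring

theorem sum_sub_hammingDist_mul_le {c : ℝ} (hp0 : ∀ v, 0 ≤ p v) (hpc : ∀ v, p v ≤ c)
    {k : ℕ} (hk : m ≤ 8 * (k + 1)) (v : Fin m → Bool) :
    ∑ w, ((m : ℝ) - 2 * hammingDist v w) * p w ≤
      m * c * #{w | hammingDist v w ≤ k} + 3 / 4 * m * ∑ w, p w := by
  rw [natCast_card_filter, mul_sum, mul_sum, ← sum_add_distrib]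
  refine sum_le_sum fun w _ => ?_
  have hd : (0 : ℝ) ≤ hammingDist v w := Nat.cast_nonneg _
  have hw := hp0 w
  split_ifs with hvw
  · nlinarith [hpc w]
  · have : (m : ℝ) ≤ 8 * hammingDist v w := by
      exact_mod_cast hk.trans (by omega)
    nlinarith

theorem sq_mul_div_le_sum_mul_sum {c : ℝ} (hp0 : ∀ v, 0 ≤ p v) (hpc : ∀ v, p v ≤ c)
    {k : ℕ} (hk : m ≤ 8 * (k + 1))
    (hball : 8 * c * ((∑ j ∈ range (k + 1), m.choose j : ℕ) : ℝ) ≤ ∑ v, p v) :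
    (∑ v, p v) ^ 2 * m / 32 ≤
      ∑ i, (∑ v with v i = false, p v) * (∑ v with v i = true, p v) := by
  set μ := ∑ v, p v
  have hμ : 0 ≤ μ := sum_nonneg fun v _ => hp0 v
  have hc : 0 ≤ c := (hp0 fun _ => true).trans (hpc _)
  have hsplit : ∀ i : Fin m, 4 * ((∑ v with v i = false, p v) * (∑ v with v i = true, p v)) =
      μ ^ 2 - (∑ v, boolSign (v i) * p v) ^ 2 := by
    intro i
    have hsum : μ = ∑ v with v i = true, p v + ∑ v with v i = false, p v := by
      show ∑ v, p v = _
      rw [← sum_filter_add_sum_filter_not univ (fun v : Fin m → Bool => v i = true) p]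
      simp
    have hbias : ∑ v, boolSign (v i) * p v =
        ∑ v with v i = true, p v - ∑ v with v i = false, p v := by
      simp [boolSign, ite_mul, sum_ite, sum_neg_distrib, sub_eq_add_neg]
    rw [hsum, hbias]
    ring
  have hrow : ∀ v, ∑ w, ((m : ℝ) - 2 * hammingDist v w) * p w ≤ 7 / 8 * m * μ := by
    intro v
    have hcard : (#{w | hammingDist v w ≤ k} : ℝ) ≤
        ((∑ j ∈ range (k + 1), m.choose j : ℕ) : ℝ) := by
      exact_mod_cast card_filter_hammingDist_le v k
    have hclose : c * #{w | hammingDist v w ≤ k} ≤ μ / 8 := by nlinarith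
    have hm : (0 : ℝ) ≤ m := Nat.cast_nonneg m
    nlinarith [sum_sub_hammingDist_mul_le p hp0 hpc hk v]
  have hbias : ∑ i, (∑ v, boolSign (v i) * p v) ^ 2 ≤ 7 / 8 * m * μ ^ 2 :=
    calc ∑ i, (∑ v, boolSign (v i) * p v) ^ 2
        = ∑ v, p v * ∑ w, ((m : ℝ) - 2 * hammingDist v w) * p w := sum_sq_sum_boolSign_mul p
      _ ≤ ∑ v, p v * (7 / 8 * m * μ) :=
          sum_le_sum fun v _ => mul_le_mul_of_nonneg_left (hrow v) (hp0 v)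
      _ = 7 / 8 * m * μ ^ 2 := by rw [← sum_mul]; ring
  have hsum := sum_congr rfl fun i (_ : i ∈ univ) => hsplit i
  rw [← mul_sum, sum_sub_distrib, sum_const, card_univ, Fintype.card_fin, nsmul_eq_mul] at hsum
  linarith

end SignVectors

theorem eight_mul_inv_two_pow_mul_sum_choose_le {m : ℕ} (hm : 25 ≤ m) :
    8 * ((2 : ℝ) ^ m)⁻¹ * ((∑ j ∈ range (m / 8 + 1), m.choose j : ℕ) : ℝ) ≤
      2 ^ (-(m : ℝ) / 3) := by
  set N : ℝ := ((∑ j ∈ range (m / 8 + 1), m.choose j : ℕ) : ℝ)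
  set x : ℝ := 2 ^ ((m : ℝ) / 3)
  have hx : 0 < x := by positivity
  have hx3 : x ^ 3 = 2 ^ m := by
    rw [← Real.rpow_natCast x, ← Real.rpow_mul zero_le_two]
    norm_num
  have h8N : 8 * N ≤ x ^ 2 := by
    refine (pow_le_pow_iff_left₀ (by positivity) (by positivity) three_ne_zero).1 ?_
    calc (8 * N) ^ 3 ≤ 4 ^ m := by
          simp only [N]
          exact_mod_cast eight_mul_sum_range_choose_cube_le hm
      _ = (x ^ 2) ^ 3 := by
        rw [← pow_mul, mul_comm, pow_mul, hx3, ← pow_mul, mul_comm, pow_mul]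
        norm_num
  rw [neg_div, Real.rpow_neg zero_le_two, ← hx3]
  calc 8 * (x ^ 3)⁻¹ * N = 8 * N / x ^ 3 := by ring
    _ ≤ x ^ 2 / x ^ 3 := by gcongr
    _ = x⁻¹ := by field_simp

/-- The index vector of the part of `W_CF^m` containing `x`, with `true` standing for `+1`. -/
noncomputable def cfBits (m : ℕ) (x : ℝ) : Fin m → Bool :=
  fun i => Nat.testBit ⌊x * 2 ^ m⌋₊ i

theorem cfPart_eq_inter_preimage (m : ℕ) (i : Fin m) (s : Bool) :
    cfPart m i s = Set.Ico 0 1 ∩ cfBits m ⁻¹' {v | v i = s} := rfl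

theorem measurable_cfBits (m : ℕ) : Measurable (cfBits m) :=
  measurable_pi_lambda _ fun i =>
    (measurable_from_nat (f := fun n => n.testBit i)).comp
      (Nat.measurable_floor.comp (measurable_id.mul_const _))

theorem floor_mul_two_pow_lt {x : ℝ} (hx : x ∈ Set.Ico (0 : ℝ) 1) (m : ℕ) :
    ⌊x * 2 ^ m⌋₊ < 2 ^ m := by
  refine (Nat.floor_lt (by have := hx.1; positivity)).2 ?_
  push_cast
  nlinarith [hx.2, pow_pos (two_pos : (0 : ℝ) < 2) m]

theorem floor_eq_of_cfBits_eq {m : ℕ} {x y : ℝ} (hx : x ∈ Set.Ico (0 : ℝ) 1)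
    (hy : y ∈ Set.Ico (0 : ℝ) 1) (h : cfBits m x = cfBits m y) :
    ⌊x * 2 ^ m⌋₊ = ⌊y * 2 ^ m⌋₊ := by
  refine Nat.eq_of_testBit_eq fun i => ?_
  by_cases hi : i < m
  · exact congrFun h ⟨i, hi⟩
  · have hmi : 2 ^ m ≤ 2 ^ i := Nat.pow_le_pow_right two_pos (not_lt.1 hi)
    rw [Nat.testBit_eq_false_of_lt ((floor_mul_two_pow_lt hx m).trans_le hmi),
      Nat.testBit_eq_false_of_lt ((floor_mul_two_pow_lt hy m).trans_le hmi)]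

theorem volume_inter_cfBits_preimage_le (m : ℕ) (v : Fin m → Bool) :
    volume (Set.Ico 0 1 ∩ cfBits m ⁻¹' {v}) ≤ ENNReal.ofReal ((2 ^ m)⁻¹) := by
  rcases (Set.Ico 0 1 ∩ cfBits m ⁻¹' {v}).eq_empty_or_nonempty with h | ⟨x, hx⟩
  · simp [h]
  set n := ⌊x * 2 ^ m⌋₊
  have h2m : (0 : ℝ) < 2 ^ m := by positivity
  calc volume (Set.Ico 0 1 ∩ cfBits m ⁻¹' {v})
      ≤ volume (Set.Ico ((n : ℝ) / 2 ^ m) ((n + 1) / 2 ^ m)) := by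
        refine measure_mono fun y hy => ?_
        have hn : ⌊y * 2 ^ m⌋₊ = n := floor_eq_of_cfBits_eq hy.1 hx.1 (hy.2.trans hx.2.symm)
        rw [Set.mem_Ico, div_le_iff₀ h2m, lt_div_iff₀ h2m, ← hn]
        exact ⟨Nat.floor_le (by have := hy.1.1; positivity), Nat.lt_floor_add_one _⟩
    _ = ENNReal.ofReal ((2 ^ m)⁻¹) := by
        rw [Real.volume_Ico]
        congr 1
        field_simp
        ring

section CellMass

variable (m : ℕ) (A : Set ℝ)

noncomputable def cfCellMass (v : Fin m → Bool) : ℝ :=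
  (volume.restrict (A ∩ Set.Ico 0 1)).real (cfBits m ⁻¹' {v})

theorem sum_cfCellMass (T : Finset (Fin m → Bool)) :
    ∑ v ∈ T, cfCellMass m A v = volume.real (A ∩ Set.Ico 0 1 ∩ cfBits m ⁻¹' T) := by
  have : IsFiniteMeasure (volume.restrict (A ∩ Set.Ico 0 1)) :=
    isFiniteMeasure_restrict.2
      ((measure_mono Set.inter_subset_right).trans_lt measure_Ico_lt_top).ne
  simp only [cfCellMass]
  rw [sum_measureReal_preimage_singleton T
      fun v _ => measurable_cfBits m (measurableSet_singleton v),
    measureReal_restrict_apply (measurable_cfBits m (Set.toFinite _).measurableSet), Set.inter_comm]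

theorem sum_filter_cfCellMass (i : Fin m) (s : Bool) :
    ∑ v with v i = s, cfCellMass m A v = volume.real (A ∩ cfPart m i s) := by
  rw [sum_cfCellMass, cfPart_eq_inter_preimage, coe_filter]
  simp [Set.inter_assoc]

variable {A} in
theorem sum_univ_cfCellMass (hA : A ⊆ Set.Icc 0 1) : ∑ v, cfCellMass m A v = volume.real A := by
  rw [sum_cfCellMass, coe_univ, Set.preimage_univ, Set.inter_univ,
    measureReal_congr ((Filter.EventuallyEq.refl _ A).inter Ico_ae_eq_Icc), Set.inter_eq_left.2 hA]

theorem cfCellMass_le (v : Fin m → Bool) : cfCellMass m A v ≤ (2 ^ m)⁻¹ := by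
  rw [cfCellMass, measureReal_restrict_apply (measurable_cfBits m (measurableSet_singleton v))]
  calc volume.real (cfBits m ⁻¹' {v} ∩ (A ∩ Set.Ico 0 1))
      ≤ volume.real (Set.Ico 0 1 ∩ cfBits m ⁻¹' {v}) :=
        measureReal_mono (fun x hx => ⟨hx.2.2, hx.1⟩)
          ((volume_inter_cfBits_preimage_le m v).trans_lt ENNReal.ofReal_lt_top).ne
    _ ≤ (2 ^ m)⁻¹ :=
        ENNReal.toReal_le_of_le_ofReal (by positivity) (volume_inter_cfBits_preimage_le m v)

end CellMass

theorem stmt12_general (m k : ℕ) (hm : 25 ≤ m)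
    (U : Fin k → Set ℝ)
    (hsub : ∀ t, U t ⊆ Set.Icc 0 1)
    (t : Fin k) (ht : (2:ℝ)^(-(m:ℝ)/3) < (volume (U t)).toReal) :
    (volume (U t)).toReal^2 * m / 32 ≤
      ∑ i : Fin m, (volume (U t ∩ cfPart m i false)).toReal
        * (volume (U t ∩ cfPart m i true)).toReal := by
  simp only [← measureReal_def, ← sum_filter_cfCellMass, ← sum_univ_cfCellMass m (hsub t)]
    at ht ⊢
  exact sq_mul_div_le_sum_mul_sum _ (fun _ => measureReal_nonneg) (cfCellMass_le m (U t))
    (k := m / 8) (by omega) ((eight_mul_inv_two_pow_mul_sum_choose_le hm).trans ht.le)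

theorem stmt12 (m k : ℕ) (hm : 25 ≤ m) (hk : (k:ℝ) < 2^((m:ℝ)/4))
    (U : Fin k → Set ℝ) (hmeas : ∀ t, MeasurableSet (U t))
    (hsub : ∀ t, U t ⊆ Set.Icc 0 1) (hnn : ∀ t, 0 < (volume (U t)).toReal)
    (t : Fin k) (ht : (2:ℝ)^(-(m:ℝ)/3) < (volume (U t)).toReal) :
    (volume (U t)).toReal^2 * m / 32 ≤
      ∑ i : Fin m, (volume (U t ∩ cfPart m i false)).toReal
        * (volume (U t ∩ cfPart m i true)).toReal :=
  stmt12_general m k hm U hsub t ht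
end

section
/- There is no graphon W, positive real c, and sequence of positive reals ε_i → 0 such that every weak ε_i-regular partition of W has at least 2^(c·ε_i^(-2)) parts. -/
open MeasureTheory

/-!
The energy (mean square density) of a partition of `[0,1]` lies in `[0,1]`. If a partition `U` is
not weakly `δ`-regular, as witnessed by `A` and `B`, its common refinement with `A` and `B` has at
most four times as many parts and energy larger by the square of the discrepancy, which exceeds
`δ²`: the refinement's densities project orthogonally onto those of `U`, and the discrepancy is
an inner product with the difference. By hypothesis no partition into fewer than `2 ^ (c ε⁻²)`
parts is weakly `ε`-regular, so starting from any partition into `k` parts and taking `ε = εᵢ`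
small next to `k`, one may refine about `c ε⁻² / 4` times and gain energy `c / 4`. Doing this more
than `4 / c` times pushes the energy above `1`.
-/

open Set Filter Topology Function

structure IsUnitValuedKernel (W : ℝ → ℝ → ℝ) : Prop where
  measurable : Measurable (fun p : ℝ × ℝ => W p.1 p.2)
  mem_Icc : ∀ x y, W x y ∈ Icc (0:ℝ) 1

lemma volume_ne_top_of_subset_Icc {S : Set ℝ} (hS : S ⊆ Icc 0 1) : volume S ≠ ⊤ :=
  ((measure_mono hS).trans_lt measure_Icc_lt_top).ne

section Density

variable {W : ℝ → ℝ → ℝ} {A A' B B' : Set ℝ}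

lemma volume_prod_lt_top (hA : A ⊆ Icc 0 1) (hB : B ⊆ Icc 0 1) : volume (A ×ˢ B) < ⊤ := by
  rw [Measure.volume_eq_prod, Measure.prod_prod]
  exact ENNReal.mul_lt_top (volume_ne_top_of_subset_Icc hA).lt_top
    (volume_ne_top_of_subset_Icc hB).lt_top

lemma IsUnitValuedKernel.norm_le_one (hW : IsUnitValuedKernel W) (p : ℝ × ℝ) : ‖W p.1 p.2‖ ≤ 1 := by
  rw [Real.norm_of_nonneg (hW.mem_Icc p.1 p.2).1]
  exact (hW.mem_Icc p.1 p.2).2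

lemma IsUnitValuedKernel.integrableOn (hW : IsUnitValuedKernel W) (hA : A ⊆ Icc 0 1)
    (hB : B ⊆ Icc 0 1) : IntegrableOn (fun p : ℝ × ℝ => W p.1 p.2) (A ×ˢ B) :=
  Measure.integrableOn_of_bounded (volume_prod_lt_top hA hB).ne
    hW.measurable.aestronglyMeasurable (.of_forall hW.norm_le_one)

lemma graphonDensity_nonneg (hW : IsUnitValuedKernel W) (A B : Set ℝ) :
    0 ≤ graphonDensity W A B :=
  integral_nonneg fun p => (hW.mem_Icc p.1 p.2).1

lemma graphonDensity_le_mul (hW : IsUnitValuedKernel W) (hA : A ⊆ Icc 0 1)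
    (hB : B ⊆ Icc 0 1) : graphonDensity W A B ≤ volume.real A * volume.real B := by
  have h := norm_setIntegral_le_of_norm_le_const (volume_prod_lt_top hA hB)
    (fun p _ => hW.norm_le_one p)
  rw [one_mul, Measure.volume_eq_prod, measureReal_prod_prod, ← Measure.volume_eq_prod] at h
  exact (le_abs_self _).trans h

lemma graphonDensity_congr_ae (hA : A =ᵐ[volume] A') (hB : B =ᵐ[volume] B') :
    graphonDensity W A B = graphonDensity W A' B' := by
  unfold graphonDensity
  rw [setIntegral_congr_set (by simpa [Measure.volume_eq_prod] using Measure.set_prod_ae_eq hA hB)]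

lemma graphonDensity_iUnion_left {ι : Type*} [Fintype ι] (hW : IsUnitValuedKernel W)
    {X : ι → Set ℝ} (hXm : ∀ i, MeasurableSet (X i)) (hXd : Pairwise (Disjoint on X))
    (hX : ∀ i, X i ⊆ Icc 0 1) (hBm : MeasurableSet B) (hB : B ⊆ Icc 0 1) :
    graphonDensity W (⋃ i, X i) B = ∑ i, graphonDensity W (X i) B := by
  unfold graphonDensity
  rw [iUnion_prod_const]
  exact integral_iUnion_fintype (fun i => (hXm i).prod hBm)
    (fun i j hij => disjoint_prod.2 (Or.inl (hXd hij))) (fun i => hW.integrableOn (hX i) hB)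

lemma graphonDensity_iUnion_right {ι : Type*} [Fintype ι] (hW : IsUnitValuedKernel W)
    {Y : ι → Set ℝ} (hAm : MeasurableSet A) (hA : A ⊆ Icc 0 1) (hYm : ∀ i, MeasurableSet (Y i))
    (hYd : Pairwise (Disjoint on Y)) (hY : ∀ i, Y i ⊆ Icc 0 1) :
    graphonDensity W A (⋃ i, Y i) = ∑ i, graphonDensity W A (Y i) := by
  unfold graphonDensity
  rw [prod_iUnion]
  exact integral_iUnion_fintype (fun i => hAm.prod (hYm i))
    (fun i j hij => disjoint_prod.2 (Or.inr (hYd hij))) (fun i => hW.integrableOn hA (hY i))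

end Density

structure IsUnitIntervalPartition {ι : Type*} (P : ι → Set ℝ) : Prop where
  measurableSet : ∀ i, MeasurableSet (P i)
  pairwise_disjoint : Pairwise (Disjoint on P)
  iUnion_eq : ⋃ i, P i = Icc (0:ℝ) 1

structure IsNonnullPartition {ι : Type*} (P : ι → Set ℝ) : Prop
    extends IsUnitIntervalPartition P where
  measureReal_pos : ∀ i, 0 < volume.real (P i)

noncomputable def energy (W : ℝ → ℝ → ℝ) {ι : Type*} [Fintype ι] (P : ι → Set ℝ) : ℝ :=
  ∑ i, ∑ j, graphonDensity W (P i) (P j) ^ 2 / (volume.real (P i) * volume.real (P j))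

noncomputable def discrepancy (W : ℝ → ℝ → ℝ) {ι : Type*} [Fintype ι] (U : ι → Set ℝ)
    (A B : Set ℝ) : ℝ :=
  graphonDensity W A B - ∑ i, ∑ j,
    graphonDensity W (U i) (U j) / (volume.real (U i) * volume.real (U j))
      * volume.real (U i ∩ A) * volume.real (U j ∩ B)

section Partition

variable {ι κ : Type*} {W : ℝ → ℝ → ℝ} {P : ι → Set ℝ}

lemma IsUnitIntervalPartition.subset_Icc (hP : IsUnitIntervalPartition P) (i : ι) :
    P i ⊆ Icc 0 1 :=
  hP.iUnion_eq ▸ subset_iUnion P i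

lemma IsUnitIntervalPartition.comp_equiv (hP : IsUnitIntervalPartition P) (e : κ ≃ ι) :
    IsUnitIntervalPartition (P ∘ e) where
  measurableSet i := hP.measurableSet (e i)
  pairwise_disjoint := hP.pairwise_disjoint.comp_of_injective e.injective
  iUnion_eq := (e.surjective.iUnion_comp P).trans hP.iUnion_eq

lemma IsUnitIntervalPartition.volume_eq_zero (hP : IsUnitIntervalPartition P) {i : ι}
    (hi : ¬ 0 < volume.real (P i)) : volume (P i) = 0 :=
  (measureReal_eq_zero_iff (volume_ne_top_of_subset_Icc (hP.subset_Icc i))).1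
    (le_antisymm (not_lt.1 hi) measureReal_nonneg)

variable [Fintype ι] [Fintype κ]

lemma energy_nonneg (W : ℝ → ℝ → ℝ) (P : ι → Set ℝ) : 0 ≤ energy W P := by
  unfold energy
  positivity

lemma energy_comp_equiv (e : κ ≃ ι) : energy W (P ∘ e) = energy W P :=
  Fintype.sum_equiv e _ _ fun _ => Fintype.sum_equiv e _ _ fun _ => rfl

namespace IsUnitIntervalPartition

lemma sum_measureReal (hP : IsUnitIntervalPartition P) : ∑ i, volume.real (P i) = 1 := by
  rw [← measureReal_iUnion_fintype hP.pairwise_disjoint hP.measurableSet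
    (fun i => volume_ne_top_of_subset_Icc (hP.subset_Icc i)), hP.iUnion_eq]
  simp

lemma energy_le_one (hW : IsUnitValuedKernel W) (hP : IsUnitIntervalPartition P) :
    energy W P ≤ 1 := by
  have hterm : ∀ i j, graphonDensity W (P i) (P j) ^ 2 / (volume.real (P i) * volume.real (P j))
      ≤ volume.real (P i) * volume.real (P j) := fun i j => by
    have h0 := graphonDensity_nonneg hW (P i) (P j)
    have h1 := graphonDensity_le_mul hW (hP.subset_Icc i) (hP.subset_Icc j)
    exact div_le_of_le_mul₀ (by positivity) (by positivity) (by nlinarith)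
  calc energy W P ≤ ∑ i, ∑ j, volume.real (P i) * volume.real (P j) :=
        Finset.sum_le_sum fun i _ => Finset.sum_le_sum fun j _ => hterm i j
    _ = 1 := by rw [← Finset.sum_mul_sum, hP.sum_measureReal, one_mul]

lemma graphonDensity_eq_sum_inter (hW : IsUnitValuedKernel W) (hP : IsUnitIntervalPartition P)
    {A B : Set ℝ} (hAm : MeasurableSet A) (hBm : MeasurableSet B) (hA : A ⊆ Icc 0 1)
    (hB : B ⊆ Icc 0 1) :
    graphonDensity W A B = ∑ i, ∑ j, graphonDensity W (P i ∩ A) (P j ∩ B) := by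
  have hdecomp : ∀ S : Set ℝ, S ⊆ Icc 0 1 → ⋃ i, P i ∩ S = S := fun S hS => by
    rw [← iUnion_inter, hP.iUnion_eq, inter_eq_right.2 hS]
  have hdisj : ∀ S : Set ℝ, Pairwise (Disjoint on fun i => P i ∩ S) := fun S i j hij =>
    (hP.pairwise_disjoint hij).mono inter_subset_left inter_subset_left
  have hsub : ∀ S : Set ℝ, ∀ i, P i ∩ S ⊆ Icc 0 1 := fun S i =>
    inter_subset_left.trans (hP.subset_Icc i)
  conv_lhs => rw [← hdecomp A hA, ← hdecomp B hB]
  rw [graphonDensity_iUnion_left hW (fun i => (hP.measurableSet i).inter hAm) (hdisj A) (hsub A)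
    (.iUnion fun j => (hP.measurableSet j).inter hBm) (iUnion_subset (hsub B))]
  exact Finset.sum_congr rfl fun i _ => graphonDensity_iUnion_right hW
    ((hP.measurableSet i).inter hAm) (hsub A i) (fun j => (hP.measurableSet j).inter hBm)
    (hdisj B) (hsub B)

end IsUnitIntervalPartition

end Partition

lemma isWeakRegularPartition_iff {W : ℝ → ℝ → ℝ} {ε : ℝ} {k : ℕ} {U : Fin k → Set ℝ} :
    IsWeakRegularPartition W ε k U ↔ IsNonnullPartition U ∧
      ∀ A B : Set ℝ, MeasurableSet A → MeasurableSet B → A ⊆ Icc 0 1 → B ⊆ Icc 0 1 →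
        |discrepancy W U A B| ≤ ε :=
  ⟨fun ⟨hm, _, hpos, hd, hu, hreg⟩ => ⟨⟨⟨hm, hd, hu⟩, hpos⟩, hreg⟩,
    fun ⟨⟨⟨hm, hd, hu⟩, hpos⟩, hreg⟩ => ⟨hm, (⟨hm, hd, hu⟩ : IsUnitIntervalPartition U).subset_Icc,
      hpos, hd, hu, hreg⟩⟩

section Nonnull

variable {ι : Type*} [Fintype ι] {W : ℝ → ℝ → ℝ} {P : ι → Set ℝ}

lemma IsUnitIntervalPartition.exists_measureReal_pos (hP : IsUnitIntervalPartition P) :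
    ∃ i, 0 < volume.real (P i) := by
  by_contra! h
  linarith [hP.sum_measureReal, Finset.sum_nonpos fun i (_ : i ∈ Finset.univ) => h i]

lemma sum_subtype_eq_sum_of_eq_zero {p : ι → Prop} [DecidablePred p] (f : ι → ℝ)
    (hf : ∀ i, ¬ p i → f i = 0) : ∑ i : Subtype p, f i = ∑ i, f i := by
  have h0 : ∑ i : {i // ¬ p i}, f i = 0 := Finset.sum_eq_zero fun i _ => hf i i.2
  rw [← Fintype.sum_subtype_add_sum_subtype p f, h0, add_zero]

lemma energy_subtype_pos (W : ℝ → ℝ → ℝ) (P : ι → Set ℝ) :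
    energy W (fun i : {i // 0 < volume.real (P i)} => P i) = energy W P := by
  classical
  have hnull : ∀ i, ¬ 0 < volume.real (P i) → volume.real (P i) = 0 := fun i h =>
    le_antisymm (not_lt.1 h) measureReal_nonneg
  unfold energy
  rw [sum_subtype_eq_sum_of_eq_zero
    (fun i => ∑ j : {j // 0 < volume.real (P j)}, graphonDensity W (P i) (P j) ^ 2 /
      (volume.real (P i) * volume.real (P j))) fun i hi => by simp [hnull i hi]]
  exact Finset.sum_congr rfl fun i _ => sum_subtype_eq_sum_of_eq_zero
    (fun j => graphonDensity W (P i) (P j) ^ 2 / (volume.real (P i) * volume.real (P j)))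
    fun j hj => by simp [hnull j hj]

/-- The null parts are absorbed into one part of positive measure, which changes no part by
more than a null set. -/
lemma IsUnitIntervalPartition.exists_nonnull (hP : IsUnitIntervalPartition P) :
    ∃ Q : {i // 0 < volume.real (P i)} → Set ℝ, IsNonnullPartition Q ∧ energy W Q = energy W P := by
  classical
  set S := {i // 0 < volume.real (P i)}
  obtain ⟨i₀, hi₀⟩ := hP.exists_measureReal_pos
  set s₀ : S := ⟨i₀, hi₀⟩
  set N := ⋃ (i) (_ : ¬ 0 < volume.real (P i)), P i
  have hNm : MeasurableSet N := .iUnion fun i => .iUnion fun _ => hP.measurableSet i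
  have hN : volume N = 0 :=
    measure_iUnion_null fun i => measure_iUnion_null fun hi => hP.volume_eq_zero hi
  have hN_disj : ∀ t : S, Disjoint N (P t) := fun t => by
    simp only [N, disjoint_iUnion_left]
    exact fun i hi => hP.pairwise_disjoint fun h => hi (h ▸ t.2)
  let N₀ : S → Set ℝ := fun s => if s = s₀ then N else ∅
  have hN₀ : ∀ s, N₀ s ⊆ N := fun s => by by_cases hs : s = s₀ <;> simp [N₀, hs]
  have hQ_ae : ∀ s : S, (P s ∪ N₀ s : Set ℝ) =ᵐ[volume] P s := fun s =>
    union_ae_eq_left_of_ae_eq_empty (ae_eq_empty.2 (measure_mono_null (hN₀ s) hN))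
  refine ⟨fun s : S => P s ∪ N₀ s, ⟨⟨fun s => ?_, fun s t hst => ?_, ?_⟩, fun s => ?_⟩, ?_⟩
  · exact (hP.measurableSet s).union (by by_cases hs : s = s₀ <;> simp [N₀, hs, hNm])
  · have hN₀st : Disjoint (N₀ s) (N₀ t) := by
      by_cases hs : s = s₀
      · simp [N₀, hs, Ne.symm (hs ▸ hst)]
      · simp [N₀, hs]
    exact disjoint_union_left.2
      ⟨disjoint_union_right.2 ⟨hP.pairwise_disjoint (Subtype.coe_injective.ne hst),
          ((hN_disj s).mono_left (hN₀ t)).symm⟩,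
        disjoint_union_right.2 ⟨(hN_disj t).mono_left (hN₀ s), hN₀st⟩⟩
  · refine Subset.antisymm (iUnion_subset fun s => union_subset (hP.subset_Icc s)
      ((hN₀ s).trans (iUnion₂_subset fun i _ => hP.subset_Icc i))) fun x hx => ?_
    rw [← hP.iUnion_eq] at hx
    obtain ⟨i, hi⟩ := mem_iUnion.1 hx
    by_cases hpos : 0 < volume.real (P i)
    · exact mem_iUnion.2 ⟨⟨i, hpos⟩, Or.inl hi⟩
    · refine mem_iUnion.2 ⟨s₀, Or.inr ?_⟩
      simp only [N₀, if_pos rfl]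
      exact mem_iUnion₂.2 ⟨i, hpos, hi⟩
  · rw [measureReal_congr (hQ_ae s)]
    exact s.2
  · rw [← energy_subtype_pos W P]
    unfold energy
    simp only [measureReal_congr (hQ_ae _), graphonDensity_congr_ae (hQ_ae _) (hQ_ae _)]

lemma IsUnitIntervalPartition.exists_fin_nonnull (hP : IsUnitIntervalPartition P) :
    ∃ k ≤ Fintype.card ι, ∃ Q : Fin k → Set ℝ, IsNonnullPartition Q ∧ energy W Q = energy W P := by
  classical
  obtain ⟨Q, hQ, hQe⟩ := hP.exists_nonnull (W := W)
  set e := Fintype.equivFin {i // 0 < volume.real (P i)}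
  exact ⟨_, Fintype.card_subtype_le _, Q ∘ e.symm,
    ⟨hQ.comp_equiv e.symm, fun i => hQ.measureReal_pos _⟩, (energy_comp_equiv e.symm).trans hQe⟩

end Nonnull

section BlockSums

variable {ι τ κ : Type*} [Fintype ι] [Fintype τ] [Fintype κ]

lemma sum_sum_mul_comp_fst (g : ι → ι → ℝ) (w : ι × τ → ι × τ → ℝ) :
    ∑ p, ∑ q, g p.1 q.1 * w p q = ∑ i, ∑ j, g i j * ∑ s, ∑ t, w (i, s) (j, t) := by
  simp only [Fintype.sum_prod_type, Finset.mul_sum]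
  exact Finset.sum_congr rfl fun i _ => Finset.sum_comm

/-- Pythagoras for the orthogonal projection, in the `ℓ²` space with weights `f p * f q`, of the
densities `d p q / (f p * f q)` onto the functions constant on the blocks `{i} × τ`. -/
lemma sum_sq_sub_blockDensity_div (f : ι × τ → ℝ) (d : ι × τ → ι × τ → ℝ) (v : ι → ℝ)
    (D : ι → ι → ℝ) (hv : ∀ i, ∑ s, f (i, s) = v i)
    (hD : ∀ i j, ∑ s, ∑ t, d (i, s) (j, t) = D i j) (hd : ∀ p q, f p * f q = 0 → d p q = 0) :
    ∑ p, ∑ q, (d p q - D p.1 q.1 / (v p.1 * v q.1) * (f p * f q)) ^ 2 / (f p * f q)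
      = ∑ p, ∑ q, d p q ^ 2 / (f p * f q) - ∑ i, ∑ j, D i j ^ 2 / (v i * v j) := by
  set r : ι → ι → ℝ := fun i j => D i j / (v i * v j) with hr
  show ∑ p, ∑ q, (d p q - r p.1 q.1 * (f p * f q)) ^ 2 / (f p * f q) = _
  have hterm : ∀ p q, (d p q - r p.1 q.1 * (f p * f q)) ^ 2 / (f p * f q)
      = d p q ^ 2 / (f p * f q) - 2 * r p.1 q.1 * d p q + r p.1 q.1 ^ 2 * (f p * f q) :=
    fun p q => by
      by_cases h : f p * f q = 0
      · simp [h, hd p q h]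
      · obtain ⟨hp, hq⟩ := mul_ne_zero_iff.1 h
        field_simp
        ring
  have hcross : ∑ p, ∑ q, 2 * r p.1 q.1 * d p q = ∑ i, ∑ j, 2 * r i j * D i j := by
    simp only [sum_sum_mul_comp_fst (fun i j => 2 * r i j) d, hD]
  have hsq : ∑ p, ∑ q, r p.1 q.1 ^ 2 * (f p * f q) = ∑ i, ∑ j, r i j ^ 2 * (v i * v j) := by
    simp only [sum_sum_mul_comp_fst (fun i j => r i j ^ 2) (fun p q => f p * f q),
      ← Finset.sum_mul_sum, hv]
  have hblock : ∀ i j, D i j ^ 2 / (v i * v j) = 2 * r i j * D i j - r i j ^ 2 * (v i * v j) :=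
    fun i j => by
      by_cases h : v i * v j = 0
      · simp [r, h]
      · obtain ⟨hi, hj⟩ := mul_ne_zero_iff.1 h
        rw [hr]
        field_simp
        ring
  simp only [hterm, hblock, Finset.sum_add_distrib, Finset.sum_sub_distrib, hcross, hsq]
  ring

lemma sq_sum_mul_le_sum_sq_div (f : κ → ℝ) (E : κ → κ → ℝ) (α β : κ → ℝ)
    (hf : ∀ p, 0 ≤ f p) (hf1 : ∑ p, f p = 1) (hE : ∀ p q, f p * f q = 0 → E p q = 0)
    (hα : ∀ p, |α p| ≤ 1) (hβ : ∀ q, |β q| ≤ 1) :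
    (∑ p, ∑ q, α p * β q * E p q) ^ 2 ≤ ∑ p, ∑ q, E p q ^ 2 / (f p * f q) := by
  have hweight : ∑ z : κ × κ, f z.1 * f z.2 = 1 := by
    simp only [Fintype.sum_prod_type, ← Finset.sum_mul_sum, hf1, one_mul]
  have hcs := Finset.sum_sq_le_sum_mul_sum_of_sq_le_mul Finset.univ
    (r := fun z : κ × κ => α z.1 * β z.2 * E z.1 z.2) (f := fun z => f z.1 * f z.2)
    (g := fun z => E z.1 z.2 ^ 2 / (f z.1 * f z.2))
    (fun z _ => mul_nonneg (hf z.1) (hf z.2))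
    (fun z _ => div_nonneg (sq_nonneg _) (mul_nonneg (hf z.1) (hf z.2))) fun z _ => by
      by_cases h : f z.1 * f z.2 = 0
      · simp [hE z.1 z.2 h]
      · rw [mul_div_cancel₀ _ h, mul_pow, mul_pow]
        have hα2 := (sq_le_one_iff_abs_le_one _).2 (hα z.1)
        have hβ2 := (sq_le_one_iff_abs_le_one _).2 (hβ z.2)
        have hE2 := sq_nonneg (E z.1 z.2)
        nlinarith [mul_le_one₀ hα2 (sq_nonneg _) hβ2]
  rw [hweight, one_mul] at hcs
  simpa only [Fintype.sum_prod_type] using hcs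

end BlockSums

def refinement {ι : Type*} (U : ι → Set ℝ) (A B : Set ℝ) (p : ι × Bool × Bool) : Set ℝ :=
  U p.1 ∩ cond p.2.1 A Aᶜ ∩ cond p.2.2 B Bᶜ

section Refinement

variable {ι : Type*} {U : ι → Set ℝ} {A B : Set ℝ} {W : ℝ → ℝ → ℝ}

lemma mem_cond_compl {b : Bool} {x : ℝ} : x ∈ cond b A Aᶜ ↔ (x ∈ A ↔ b = true) := by
  cases b <;> simp

lemma mem_refinement {p : ι × Bool × Bool} {x : ℝ} :
    x ∈ refinement U A B p ↔ x ∈ U p.1 ∧ (x ∈ A ↔ p.2.1 = true) ∧ (x ∈ B ↔ p.2.2 = true) := by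
  simp only [refinement, mem_inter_iff, mem_cond_compl, and_assoc]

lemma iUnion_refinement (i : ι) : ⋃ s, refinement U A B (i, s) = U i := by
  classical
  ext x
  simp only [mem_iUnion, mem_refinement]
  exact ⟨fun ⟨_, hx, _⟩ => hx, fun hx => ⟨(decide (x ∈ A), decide (x ∈ B)), hx, by simp, by simp⟩⟩

lemma refinement_inter_left (p : ι × Bool × Bool) :
    refinement U A B p ∩ A = if p.2.1 then refinement U A B p else ∅ := by
  ext x
  cases h : p.2.1 <;> simp [mem_refinement, h] <;> tauto

lemma refinement_inter_right (p : ι × Bool × Bool) :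
    refinement U A B p ∩ B = if p.2.2 then refinement U A B p else ∅ := by
  ext x
  cases h : p.2.2 <;> simp [mem_refinement, h]

lemma measureReal_refinement_inter_left (p : ι × Bool × Bool) :
    volume.real (refinement U A B p ∩ A)
      = (if p.2.1 then 1 else 0) * volume.real (refinement U A B p) := by
  rw [refinement_inter_left]
  split_ifs <;> simp

lemma measureReal_refinement_inter_right (p : ι × Bool × Bool) :
    volume.real (refinement U A B p ∩ B)
      = (if p.2.2 then 1 else 0) * volume.real (refinement U A B p) := by
  rw [refinement_inter_right]
  split_ifs <;> simp

lemma graphonDensity_refinement_inter (p q : ι × Bool × Bool) :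
    graphonDensity W (refinement U A B p ∩ A) (refinement U A B q ∩ B)
      = (if p.2.1 then 1 else 0) * (if q.2.2 then 1 else 0)
        * graphonDensity W (refinement U A B p) (refinement U A B q) := by
  rw [refinement_inter_left, refinement_inter_right]
  split_ifs <;> simp [graphonDensity]

lemma IsUnitIntervalPartition.refinement (hU : IsUnitIntervalPartition U) (hA : MeasurableSet A)
    (hB : MeasurableSet B) : IsUnitIntervalPartition (refinement U A B) where
  measurableSet p := ((hU.measurableSet p.1).inter (by cases p.2.1 <;> simp [hA])).inter
    (by cases p.2.2 <;> simp [hB])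
  pairwise_disjoint p q hpq := by
    refine disjoint_left.2 fun x hp hq => hpq ?_
    rw [mem_refinement] at hp hq
    have h1 : p.1 = q.1 := by
      by_contra h
      exact disjoint_left.1 (hU.pairwise_disjoint h) hp.1 hq.1
    exact Prod.ext h1 (Prod.ext (Bool.eq_iff_iff.2 (hp.2.1.symm.trans hq.2.1))
      (Bool.eq_iff_iff.2 (hp.2.2.symm.trans hq.2.2)))
  iUnion_eq := by
    rw [iUnion_prod', ← hU.iUnion_eq]
    exact iUnion_congr iUnion_refinement

lemma measureReal_inter_eq_sum_refinement (hU : IsUnitIntervalPartition U) (hA : MeasurableSet A)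
    (hB : MeasurableSet B) {C : Set ℝ} (hC : MeasurableSet C) (i : ι) :
    volume.real (U i ∩ C) = ∑ s, volume.real (refinement U A B (i, s) ∩ C) := by
  have hR := hU.refinement hA hB
  rw [← iUnion_refinement (U := U) (A := A) (B := B) i, iUnion_inter]
  exact measureReal_iUnion_fintype
    ((hR.pairwise_disjoint.comp_of_injective (Prod.mk_right_injective i)).mono
      fun s t h => h.mono inter_subset_left inter_subset_left)
    (fun s => (hR.measurableSet _).inter hC)
    (fun s => volume_ne_top_of_subset_Icc (inter_subset_left.trans (hR.subset_Icc _)))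

lemma measureReal_eq_sum_refinement (hU : IsUnitIntervalPartition U) (hA : MeasurableSet A)
    (hB : MeasurableSet B) (i : ι) :
    volume.real (U i) = ∑ s, volume.real (refinement U A B (i, s)) := by
  simpa using measureReal_inter_eq_sum_refinement hU hA hB MeasurableSet.univ i

lemma graphonDensity_eq_sum_refinement (hW : IsUnitValuedKernel W)
    (hU : IsUnitIntervalPartition U) (hA : MeasurableSet A) (hB : MeasurableSet B) (i j : ι) :
    graphonDensity W (U i) (U j)
      = ∑ s, ∑ t, graphonDensity W (refinement U A B (i, s)) (refinement U A B (j, t)) := by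
  have hR := hU.refinement hA hB
  have hdisj : ∀ i, Pairwise (Disjoint on fun s => refinement U A B (i, s)) := fun i =>
    hR.pairwise_disjoint.comp_of_injective (Prod.mk_right_injective i)
  rw [← iUnion_refinement (U := U) (A := A) (B := B) i,
    ← iUnion_refinement (U := U) (A := A) (B := B) j,
    graphonDensity_iUnion_left hW (fun s => hR.measurableSet _) (hdisj i)
      (fun s => hR.subset_Icc _) (.iUnion fun t => hR.measurableSet _)
      (iUnion_subset fun t => hR.subset_Icc _)]
  exact Finset.sum_congr rfl fun s _ => graphonDensity_iUnion_right hW (hR.measurableSet _)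
    (hR.subset_Icc _) (fun t => hR.measurableSet _) (hdisj j) (fun t => hR.subset_Icc _)

end Refinement

lemma discrepancy_eq_sum_refinement {ι : Type*} [Fintype ι] {U : ι → Set ℝ} {A B : Set ℝ}
    {W : ℝ → ℝ → ℝ} (hW : IsUnitValuedKernel W) (hU : IsUnitIntervalPartition U)
    (hAm : MeasurableSet A) (hBm : MeasurableSet B) (hA : A ⊆ Icc 0 1) (hB : B ⊆ Icc 0 1) :
    discrepancy W U A B = ∑ p, ∑ q, (if p.2.1 then 1 else 0) * (if q.2.2 then 1 else 0) *
      (graphonDensity W (refinement U A B p) (refinement U A B q)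
        - graphonDensity W (U p.1) (U q.1) / (volume.real (U p.1) * volume.real (U q.1))
          * (volume.real (refinement U A B p) * volume.real (refinement U A B q))) := by
  set r : ι → ι → ℝ := fun i j =>
    graphonDensity W (U i) (U j) / (volume.real (U i) * volume.real (U j))
  have hUAB : ∑ i, ∑ j, r i j * volume.real (U i ∩ A) * volume.real (U j ∩ B)
      = ∑ p, ∑ q, r p.1 q.1 * ((if p.2.1 then 1 else 0) * volume.real (refinement U A B p)
          * ((if q.2.2 then 1 else 0) * volume.real (refinement U A B q))) := by
    rw [sum_sum_mul_comp_fst r]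
    refine Finset.sum_congr rfl fun i _ => Finset.sum_congr rfl fun j _ => ?_
    rw [mul_assoc, measureReal_inter_eq_sum_refinement hU hAm hBm hAm,
      measureReal_inter_eq_sum_refinement hU hAm hBm hBm, Finset.sum_mul_sum]
    simp only [measureReal_refinement_inter_left, measureReal_refinement_inter_right]
  rw [discrepancy, (hU.refinement hAm hBm).graphonDensity_eq_sum_inter hW hAm hBm hA hB, hUAB,
    ← Finset.sum_sub_distrib]
  refine Finset.sum_congr rfl fun p _ => ?_
  rw [← Finset.sum_sub_distrib]
  exact Finset.sum_congr rfl fun q _ => by rw [graphonDensity_refinement_inter]; ring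

theorem discrepancy_sq_add_energy_le {ι : Type*} [Fintype ι] {U : ι → Set ℝ} {A B : Set ℝ}
    {W : ℝ → ℝ → ℝ} (hW : IsUnitValuedKernel W) (hU : IsUnitIntervalPartition U)
    (hAm : MeasurableSet A) (hBm : MeasurableSet B) (hA : A ⊆ Icc 0 1) (hB : B ⊆ Icc 0 1) :
    discrepancy W U A B ^ 2 + energy W U ≤ energy W (refinement U A B) := by
  have hR := hU.refinement hAm hBm
  set f : ι × Bool × Bool → ℝ := fun p => volume.real (refinement U A B p)
  set d : ι × Bool × Bool → ι × Bool × Bool → ℝ := fun p q =>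
    graphonDensity W (refinement U A B p) (refinement U A B q)
  set α : ι × Bool × Bool → ℝ := fun p => if p.2.1 then 1 else 0
  set β : ι × Bool × Bool → ℝ := fun q => if q.2.2 then 1 else 0
  set r : ι → ι → ℝ := fun i j =>
    graphonDensity W (U i) (U j) / (volume.real (U i) * volume.real (U j))
  have hd : ∀ p q, f p * f q = 0 → d p q = 0 := fun p q h => le_antisymm
    (h ▸ graphonDensity_le_mul hW (hR.subset_Icc p) (hR.subset_Icc q))
    (graphonDensity_nonneg hW _ _)
  have hdisc : discrepancy W U A B = ∑ p, ∑ q, α p * β q * (d p q - r p.1 q.1 * (f p * f q)) :=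
    discrepancy_eq_sum_refinement hW hU hAm hBm hA hB
  have hpythagoras : ∑ p, ∑ q, (d p q - r p.1 q.1 * (f p * f q)) ^ 2 / (f p * f q)
      = energy W (refinement U A B) - energy W U :=
    sum_sq_sub_blockDensity_div f d (fun i => volume.real (U i))
      (fun i j => graphonDensity W (U i) (U j))
      (fun i => (measureReal_eq_sum_refinement hU hAm hBm i).symm)
      (fun i j => (graphonDensity_eq_sum_refinement hW hU hAm hBm i j).symm) hd
  have hcs : discrepancy W U A B ^ 2
      ≤ ∑ p, ∑ q, (d p q - r p.1 q.1 * (f p * f q)) ^ 2 / (f p * f q) := by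
    rw [hdisc]
    refine sq_sum_mul_le_sum_sq_div f _ α β (fun p => measureReal_nonneg) hR.sum_measureReal
      (fun p q h => by simp [h, hd p q h]) (fun p => ?_) (fun q => ?_)
    · by_cases h : p.2.1 <;> simp [α, h]
    · by_cases h : q.2.2 <;> simp [β, h]
  linarith

theorem IsUnitIntervalPartition.exists_fin_nonnull_energy_ge {ι : Type*} [Fintype ι]
    {U : ι → Set ℝ} {A B : Set ℝ} {W : ℝ → ℝ → ℝ} (hW : IsUnitValuedKernel W)
    (hU : IsUnitIntervalPartition U) (hAm : MeasurableSet A) (hBm : MeasurableSet B)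
    (hA : A ⊆ Icc 0 1) (hB : B ⊆ Icc 0 1) :
    ∃ k ≤ 4 * Fintype.card ι, ∃ V : Fin k → Set ℝ, IsNonnullPartition V ∧
      energy W U + discrepancy W U A B ^ 2 ≤ energy W V := by
  obtain ⟨k, hk, V, hV, hVe⟩ := (hU.refinement hAm hBm).exists_fin_nonnull (W := W)
  refine ⟨k, ?_, V, hV, ?_⟩
  · simpa [Fintype.card_prod, mul_comm] using hk
  · linarith [discrepancy_sq_add_energy_le hW hU hAm hBm hA hB]

lemma isNonnullPartition_Icc : IsNonnullPartition (fun _ : Fin 1 => Icc (0:ℝ) 1) :=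
  ⟨⟨fun _ => measurableSet_Icc, fun i j h => absurd (Subsingleton.elim i j) h, iUnion_const _⟩,
    fun _ => by simp⟩

section Iteration

variable {W : ℝ → ℝ → ℝ}

lemma exists_energy_add_mul_le (hW : IsUnitValuedKernel W) {δ K : ℝ} (hδ : 0 ≤ δ)
    (hK : ∀ k (V : Fin k → Set ℝ), IsWeakRegularPartition W δ k V → K ≤ k) (n : ℕ) {k : ℕ}
    {U : Fin k → Set ℝ} (hU : IsNonnullPartition U) (hn : (4:ℝ) ^ n * k < K) :
    ∃ k', ∃ V : Fin k' → Set ℝ, IsNonnullPartition V ∧ (k' : ℝ) ≤ 4 ^ n * k ∧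
      energy W U + n * δ ^ 2 ≤ energy W V := by
  induction n with
  | zero => exact ⟨k, U, hU, by simp, by simp⟩
  | succ n ih =>
    have hk : (4:ℝ) ^ n * k ≤ 4 ^ (n + 1) * k := by gcongr <;> norm_num
    obtain ⟨k', V, hV, hk', hE⟩ := ih (hk.trans_lt hn)
    obtain ⟨A, B, hAm, hBm, hA, hB, hAB⟩ : ∃ A B : Set ℝ, MeasurableSet A ∧ MeasurableSet B ∧
        A ⊆ Icc 0 1 ∧ B ⊆ Icc 0 1 ∧ δ < |discrepancy W V A B| := by
      by_contra! h
      exact (hK k' V (isWeakRegularPartition_iff.2 ⟨hV, h⟩)).not_gt ((hk'.trans hk).trans_lt hn)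
    obtain ⟨k'', hk'', V', hV', hE'⟩ :=
      hV.exists_fin_nonnull_energy_ge hW hAm hBm hA hB
    refine ⟨k'', V', hV', ?_, ?_⟩
    · rw [Fintype.card_fin] at hk''
      calc (k'' : ℝ) ≤ 4 * k' := by exact_mod_cast hk''
        _ ≤ 4 * (4 ^ n * k) := by gcongr
        _ = 4 ^ (n + 1) * k := by ring
    · have hδ2 : δ ^ 2 ≤ discrepancy W V A B ^ 2 := by
        simpa only [sq_abs] using pow_le_pow_left₀ hδ hAB.le 2
      push_cast
      linarith

lemma four_pow_ceil_mul_lt_two_rpow {T : ℝ} {k : ℕ} (hT : 2 * (k + 2) ≤ T) :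
    (4:ℝ) ^ ⌈T / 4⌉₊ * k < 2 ^ T := by
  have hn : (⌈T / 4⌉₊ : ℝ) < T / 4 + 1 := Nat.ceil_lt_add_one (by linarith [k.cast_nonneg (α := ℝ)])
  calc (4:ℝ) ^ ⌈T / 4⌉₊ * k < 4 ^ ⌈T / 4⌉₊ * 2 ^ k := by
        gcongr
        exact_mod_cast Nat.lt_two_pow_self
    _ = 2 ^ ((2 * ⌈T / 4⌉₊ + k : ℕ) : ℝ) := by
        rw [Real.rpow_natCast, pow_add, pow_mul]
        norm_num
    _ ≤ 2 ^ T := Real.rpow_le_rpow_of_exponent_le one_le_two (by push_cast; linarith)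

lemma tendsto_mul_zpow_neg_two_atTop {c : ℝ} (hc : 0 < c) {ε : ℕ → ℝ} (hε : ∀ i, 0 < ε i)
    (hε0 : Tendsto ε atTop (𝓝 0)) : Tendsto (fun i => c * ε i ^ (-2:ℤ)) atTop atTop := by
  have hε' : Tendsto ε atTop (𝓝[>] 0) := tendsto_nhdsWithin_iff.2 ⟨hε0, .of_forall hε⟩
  refine (((tendsto_pow_atTop two_ne_zero).comp hε'.inv_tendsto_nhdsGT_zero).const_mul_atTop
    hc).congr fun i => ?_
  simp [zpow_neg, inv_pow]

/-- For `ε = εᵢ` with `T = c ε⁻² ≥ 2 (k + 2)`, the partitions met in `⌈T / 4⌉` refinements of `U`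
have fewer than `2 ^ T` parts, hence are not weakly `ε`-regular, and each step gains `ε²`. -/
lemma exists_energy_add_le {c : ℝ} (hW : IsUnitValuedKernel W) (hc : 0 < c) {ε : ℕ → ℝ}
    (hε : ∀ i, 0 < ε i) (hε0 : Tendsto ε atTop (𝓝 0))
    (H : ∀ i k (U : Fin k → Set ℝ), IsWeakRegularPartition W (ε i) k U →
      (2:ℝ) ^ (c * ε i ^ (-2:ℤ)) ≤ k)
    {k : ℕ} {U : Fin k → Set ℝ} (hU : IsNonnullPartition U) :
    ∃ k', ∃ V : Fin k' → Set ℝ, IsNonnullPartition V ∧ energy W U + c / 4 ≤ energy W V := by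
  obtain ⟨i, hi⟩ :=
    ((tendsto_mul_zpow_neg_two_atTop hc hε hε0).eventually_ge_atTop (2 * (k + 2))).exists
  set T := c * ε i ^ (-2:ℤ)
  have hcT : c = T * ε i ^ 2 := by
    have := (hε i).ne'
    simp only [T, zpow_neg, mul_assoc]
    field_simp
  obtain ⟨k', V, hV, -, hE⟩ := exists_energy_add_mul_le hW (hε i).le (H i) ⌈T / 4⌉₊ hU
    (four_pow_ceil_mul_lt_two_rpow hi)
  refine ⟨k', V, hV, hE.trans' ?_⟩
  have : T / 4 * ε i ^ 2 ≤ ⌈T / 4⌉₊ * ε i ^ 2 := by gcongr; exact Nat.le_ceil _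
  linarith

lemma exists_energy_ge {c : ℝ} (hW : IsUnitValuedKernel W) (hc : 0 < c) {ε : ℕ → ℝ}
    (hε : ∀ i, 0 < ε i) (hε0 : Tendsto ε atTop (𝓝 0))
    (H : ∀ i k (U : Fin k → Set ℝ), IsWeakRegularPartition W (ε i) k U →
      (2:ℝ) ^ (c * ε i ^ (-2:ℤ)) ≤ k) (N : ℕ) :
    ∃ k, ∃ U : Fin k → Set ℝ, IsNonnullPartition U ∧ N * (c / 4) ≤ energy W U := by
  induction N with
  | zero => exact ⟨1, _, isNonnullPartition_Icc, by simpa using energy_nonneg W _⟩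
  | succ N ih =>
    obtain ⟨k, U, hU, hE⟩ := ih
    obtain ⟨k', V, hV, hE'⟩ := exists_energy_add_le hW hc hε hε0 H hU
    exact ⟨k', V, hV, by push_cast; linarith⟩

end Iteration

theorem stmt13 :
    ¬ ∃ (W : ℝ → ℝ → ℝ) (c : ℝ) (ε : ℕ → ℝ),
      Measurable (fun p : ℝ × ℝ => W p.1 p.2) ∧ (∀ x y, W x y = W y x) ∧
      (∀ x y, W x y ∈ Set.Icc (0:ℝ) 1) ∧ 0 < c ∧ (∀ i, 0 < ε i) ∧
      Filter.Tendsto ε Filter.atTop (nhds 0) ∧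
      ∀ i k (U : Fin k → Set ℝ), IsWeakRegularPartition W (ε i) k U →
        (2:ℝ)^(c * (ε i)^(-2:ℤ)) ≤ k := by
  rintro ⟨W, c, ε, hWm, -, hW01, hc, hε, hε0, H⟩
  obtain ⟨N, hN⟩ := exists_nat_gt (4 / c)
  obtain ⟨k, U, hU, hE⟩ := exists_energy_ge ⟨hWm, hW01⟩ hc hε hε0 H N
  have hE1 := hU.energy_le_one ⟨hWm, hW01⟩
  rw [div_lt_iff₀ hc] at hN
  linarith
end

section
/- In the iterated refinement process for a graphon W with mean square density at most 1: if ε₁ > ε₂ > ⋯ with ε_{i+1} ≤ ε_i/2, and k₁ ≤ k₂ ≤ ⋯ ≤ k_m are nonnegative integers (k₀ = 0) with ∑_{i=1}^m (k_i − k_{i−1})·ε_i² ≤ 1, and k_i ≥ c·ε_i^(-2) for all i and a fixed c > 0, then m < 4/(3c) + 1. -/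
/-!
Write `S` for the weighted sum. Abel summation gives
`S ≥ ∑ kᵢ (εᵢ² - εᵢ₊₁²)`, and since the `εᵢ²` decay at least by a factor 4
this is `≥ ∑ (3/4) kᵢ εᵢ² ≥ (3c/4) m`; together with `S ≤ 1` this bounds `m`.
-/

/-- The extra term `r kₙ aₙ` on the left is what makes the induction go through. -/
theorem le_sum_Icc_sub_mul_of_le_mul {r c : ℝ} {a k : ℕ → ℝ} (hr : r ≤ 1)
    (hk : ∀ i, 0 ≤ k i) (hk0 : k 0 = 0) (ha : ∀ i, a (i + 1) ≤ r * a i) :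
    ∀ n, (∀ i ∈ Finset.Icc 1 n, c ≤ k i * a i) →
      (1 - r) * c * n + r * (k n * a n) ≤ ∑ i ∈ Finset.Icc 1 n, (k i - k (i - 1)) * a i
  | 0, _ => by simp [hk0]
  | n + 1, hka => by
    have ih := le_sum_Icc_sub_mul_of_le_mul hr hk hk0 ha n fun i hi =>
      hka i (Finset.Icc_subset_Icc_right n.le_succ hi)
    have hlast : c ≤ k (n + 1) * a (n + 1) := hka (n + 1) (by simp)
    have hdecay : k n * a (n + 1) ≤ r * (k n * a n) := by
      simpa [mul_left_comm] using mul_le_mul_of_nonneg_left (ha n) (hk n)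
    rw [Finset.sum_Icc_succ_top (by omega), Nat.add_sub_cancel]
    push_cast
    nlinarith [mul_le_mul_of_nonneg_left hlast (sub_nonneg.2 hr)]

theorem stmt14_general (m : ℕ) (c : ℝ) (hc : 0 < c) (ε : ℕ → ℝ) (k : ℕ → ℕ)
    (hεpos : ∀ i, 0 < ε i) (hεdec : ∀ i, ε (i+1) ≤ ε i / 2)
    (hk0 : k 0 = 0)
    (hsum : ∑ i ∈ Finset.Icc 1 m, ((k i : ℝ) - k (i-1)) * (ε i)^2 ≤ 1)
    (hki : ∀ i ∈ Finset.Icc 1 m, c / (ε i)^2 ≤ (k i : ℝ)) :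
    (m : ℝ) < 4/(3*c) + 1 := by
  have hsq : ∀ i, ε (i + 1) ^ 2 ≤ 1 / 4 * ε i ^ 2 := fun i => by
    nlinarith [pow_le_pow_left₀ (hεpos (i + 1)).le (hεdec i) 2]
  have hkε : ∀ i ∈ Finset.Icc 1 m, c ≤ (k i : ℝ) * ε i ^ 2 := fun i hi =>
    (div_le_iff₀ (pow_pos (hεpos i) 2)).1 (hki i hi)
  have hbound := le_sum_Icc_sub_mul_of_le_mul (by norm_num) (fun i => (k i).cast_nonneg)
    (by simp [hk0]) hsq m hkε
  have hlast : 0 ≤ (k m : ℝ) * ε m ^ 2 := by positivity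
  have hm : (m : ℝ) ≤ 4 / (3 * c) := by
    rw [le_div_iff₀ (by positivity)]
    linarith
  linarith

theorem stmt14 (m : ℕ) (c : ℝ) (hc : 0 < c) (ε : ℕ → ℝ) (k : ℕ → ℕ)
    (hεpos : ∀ i, 0 < ε i) (hεdec : ∀ i, ε (i+1) ≤ ε i / 2)
    (hk0 : k 0 = 0) (hmono : Monotone k)
    (hsum : ∑ i ∈ Finset.Icc 1 m, ((k i : ℝ) - k (i-1)) * (ε i)^2 ≤ 1)
    (hki : ∀ i ∈ Finset.Icc 1 m, c / (ε i)^2 ≤ (k i : ℝ)) :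
    (m : ℝ) < 4/(3*c) + 1 :=
  stmt14_general m c hc ε k hεpos hεdec hk0 hsum hki
end
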